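/- For all integers d ≥ 1, k ≥ 2, h ≥ 2 and r ≥ kh, there exists N such that for all n ≥ N, every subset A ⊆ [n]^d with |A| ≥ n^d/log n, and every r-template P of A satisfying R(P) ≤ |A|^{k(h−1)+1}/(log n)^{5kh}, the set X_{≥kh}(P) := {x ∈ A : |P(x)| ≥ kh} satisfies |X_{≥kh}(P)| ≤ |A|/(log n)^4. -/

import Mathlib

/-!
Let `Y` be the set of points of `A` whose palette has at least `kh` colours, and `m = |Y|`.
Count the `k`-tuples of injective `h`-tuples from `Y` whose rows have equal sums. By the power
mean inequality over the at most `(hn)^d` possible sums there are at least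
`(m + 1 - h)^(hk) / (hn)^(d(k-1))` of them. A tuple with `kh` distinct entries spans a
`B_{k,h}`-solution set in `Y`, which by Hall's theorem has a rainbow colouring from the palettes,
so there are at most `(kh)^(kh) R(P)` such tuples. Any other tuple repeats an entry in two
different rows, and is then determined by all but one entry of each row, so there are at most
`(kh)^2 m^(k(h-1))` of those. If `m > |A| / (log n)^4`, then `n^d ≤ m (log n)^5`, and for large
`n` both bounds are too small to account for all the tuples.
-/

open Finset

/-- The `d`-dimensional grid `[n]^d = {1,…,n}^d`, as a finset of functions `Fin d → ℕ`. -/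
def grid (n d : ℕ) : Finset (Fin d → ℕ) :=
  Fintype.piFinset fun _ => Finset.Icc 1 n

/-- `X` is a `B_{k,h}`-solution set: `X` consists of `k*h` (pairwise distinct) points that can
be partitioned into `k` groups of `h` points each, all groups having the same sum. -/
def IsBkhSol (d k h : ℕ) (X : Finset (Fin d → ℕ)) : Prop :=
  X.card = k * h ∧
  ∃ P : Fin k → Finset (Fin d → ℕ),
    (∀ ℓ, (P ℓ).card = h) ∧
    (∀ ℓ₁ ℓ₂, ℓ₁ ≠ ℓ₂ → Disjoint (P ℓ₁) (P ℓ₂)) ∧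
    Finset.univ.biUnion P = X ∧
    (∀ ℓ₁ ℓ₂ : Fin k, (P ℓ₁).sum id = (P ℓ₂).sum id)

/-- The coloring `c` of `A` has a rainbow solution to the `B_{k,h}`-equation. -/
def HasRainbow (d k h r : ℕ) (A : Finset (Fin d → ℕ)) (c : ↥A → Fin r) : Prop :=
  ∃ X : Finset ↥A, IsBkhSol d k h (X.image Subtype.val) ∧ Set.InjOn c ↑X

/-- `gr d k h r A` is the number of `r`-colorings of `A` without rainbow solutions to the
`B_{k,h}`-equation. -/
noncomputable def gr (d k h r : ℕ) (A : Finset (Fin d → ℕ)) : ℕ :=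
  Nat.card {c : ↥A → Fin r // ¬ HasRainbow d k h r A c}

/-- `fdkh d k h A` is the number of `B_{k,h}`-solution sets contained in `A`. -/
noncomputable def fdkh (d k h : ℕ) (A : Finset (Fin d → ℕ)) : ℕ :=
  Nat.card {X : Finset (Fin d → ℕ) // X ⊆ A ∧ IsBkhSol d k h X}

/-- `S` is a rainbow-solution subtemplate of the `r`-template `P` of `A`: a `B_{k,h}`-solution
set in `A` together with an injective assignment of colors from the palettes of `P`. -/
def IsRainbowSub (d k h r : ℕ) (A : Finset (Fin d → ℕ))
    (P : (Fin d → ℕ) → Finset (Fin r)) (S : Finset ((Fin d → ℕ) × Fin r)) : Prop :=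
  Set.InjOn Prod.fst (S : Set ((Fin d → ℕ) × Fin r)) ∧
  Set.InjOn Prod.snd (S : Set ((Fin d → ℕ) × Fin r)) ∧
  S.image Prod.fst ⊆ A ∧ IsBkhSol d k h (S.image Prod.fst) ∧
  ∀ p ∈ S, p.2 ∈ P p.1

/-- `rainbowCount d k h r A P` is the number `R(P)` of rainbow-solution subtemplates of `P`. -/
noncomputable def rainbowCount (d k h r : ℕ) (A : Finset (Fin d → ℕ))
    (P : (Fin d → ℕ) → Finset (Fin r)) : ℕ :=
  Nat.card {S : Finset ((Fin d → ℕ) × Fin r) // IsRainbowSub d k h r A P S}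

lemma exists_injective_mem_of_card_le {α β : Type*} [DecidableEq β] (X : Finset α)
    (P : α → Finset β) (hP : ∀ x ∈ X, #X ≤ #(P x)) :
    ∃ f : X → β, Function.Injective f ∧ ∀ x : X, f x ∈ P x := by
  classical
  refine (all_card_le_biUnion_card_iff_exists_injective fun x : X => P x).1 fun s => ?_
  rcases s.eq_empty_or_nonempty with rfl | ⟨x, hx⟩
  · simp
  calc #s ≤ #X := by simpa using card_le_univ s
    _ ≤ #(P x) := hP x x.2
    _ ≤ _ := card_le_card (subset_biUnion_of_mem (fun x : X => P x) hx)

lemma descFactorial_le_card_filter_injective {α : Type*} [DecidableEq α] (Y : Finset α) (h : ℕ) :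
    (#Y).descFactorial h ≤ #{u ∈ Fintype.piFinset fun _ : Fin h => Y | Function.Injective u} := by
  calc (#Y).descFactorial h = Fintype.card (Fin h ↪ Y) := by
        rw [Fintype.card_embedding_eq, Fintype.card_coe, Fintype.card_fin]
    _ ≤ _ := by
        rw [← card_univ]
        refine card_le_card_of_injOn (fun e i => (e i : α)) (fun e _ => ?_) ?_
        · simp only [coe_filter, Fintype.mem_piFinset, Set.mem_ofPred_eq]
          exact ⟨fun i => (e i).2, fun i j hij => e.injective (Subtype.ext hij)⟩
        · intro e _ e' _ hee
          ext i
          exact congrFun hee i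

lemma card_pow_le_card_pow_mul_card_filter_forall_eq {β γ : Type*} [DecidableEq γ]
    {s : Finset β} {t : Finset γ} {f : β → γ} (hf : ∀ x ∈ s, f x ∈ t) {k : ℕ} (hk : k ≠ 0) :
    #s ^ k ≤ #t ^ (k - 1) *
      #{T ∈ Fintype.piFinset fun _ : Fin k => s | ∀ i j, f (T i) = f (T j)} := by
  obtain ⟨k, rfl⟩ : ∃ k', k = k' + 1 := ⟨k - 1, by omega⟩
  have hfiber (c : γ) : {T ∈ {T ∈ Fintype.piFinset fun _ : Fin (k + 1) => s |
      ∀ i j, f (T i) = f (T j)} | f (T 0) = c} =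
      Fintype.piFinset fun _ => {x ∈ s | f x = c} := by
    ext T
    simp only [mem_filter, Fintype.mem_piFinset]
    exact ⟨fun ⟨⟨hs, hT⟩, hc⟩ i => ⟨hs i, (hT i 0).trans hc⟩,
      fun h => ⟨⟨fun i => (h i).1, fun i j => (h i).2.trans (h j).2.symm⟩, (h 0).2⟩⟩
  calc #s ^ (k + 1) = (∑ c ∈ t, #{x ∈ s | f x = c}) ^ (k + 1) := by
        rw [card_eq_sum_card_fiberwise hf]
    _ ≤ #t ^ k * ∑ c ∈ t, #{x ∈ s | f x = c} ^ (k + 1) :=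
        pow_sum_le_card_mul_sum_pow (fun _ _ => Nat.zero_le _) k
    _ = _ := by
        rw [card_eq_sum_card_fiberwise (f := fun T => f (T 0)) (t := t)
          fun T hT => hf _ (Fintype.mem_piFinset.1 (mem_filter.1 hT).1 0)]
        simp only [hfiber, Fintype.card_piFinset, prod_const, card_univ, Fintype.card_fin,
          Nat.add_sub_cancel]

/-- Forgetting the entry `e ℓ` of every row `ℓ` loses nothing: the common row sum is recovered
from row `ℓ₂`, whose forgotten entry equals the kept entry `T ℓ₁ i₁`, and then each forgotten
entry is its row sum minus the kept ones. -/
lemma eq_of_sum_eq_of_succAbove_eq {α : Type*} [AddCancelCommMonoid α] {k h : ℕ}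
    {T T' : Fin k → Fin (h + 1) → α} (e : Fin k → Fin (h + 1)) {ℓ₁ ℓ₂ : Fin k} {i₁ : Fin (h + 1)}
    (he : i₁ ≠ e ℓ₁) (hT : ∀ ℓ ℓ', ∑ i, T ℓ i = ∑ i, T ℓ' i)
    (hT' : ∀ ℓ ℓ', ∑ i, T' ℓ i = ∑ i, T' ℓ' i) (hTe : T ℓ₁ i₁ = T ℓ₂ (e ℓ₂))
    (hT'e : T' ℓ₁ i₁ = T' ℓ₂ (e ℓ₂))
    (hkept : ∀ ℓ i, T ℓ ((e ℓ).succAbove i) = T' ℓ ((e ℓ).succAbove i)) : T = T' := by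
  have hsplit (T : Fin k → Fin (h + 1) → α) (ℓ : Fin k) :
      ∑ i, T ℓ i = T ℓ (e ℓ) + ∑ i, T ℓ ((e ℓ).succAbove i) :=
    Fin.sum_univ_succAbove _ _
  have hi₁ : T ℓ₁ i₁ = T' ℓ₁ i₁ := by
    obtain ⟨i, rfl⟩ := Fin.exists_succAbove_eq he
    exact hkept ℓ₁ i
  have hsum₂ : ∑ i, T ℓ₂ i = ∑ i, T' ℓ₂ i := by
    rw [hsplit T, hsplit T', ← hTe, ← hT'e, hi₁]
    simp only [hkept]
  have hforgot (ℓ : Fin k) : T ℓ (e ℓ) = T' ℓ (e ℓ) := by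
    have := (hT ℓ ℓ₂).trans (hsum₂.trans (hT' ℓ₂ ℓ))
    rw [hsplit T, hsplit T'] at this
    simp only [hkept] at this
    exact add_right_cancel this
  funext ℓ i
  by_cases hi : i = e ℓ
  · rw [hi, hforgot]
  · obtain ⟨j, rfl⟩ := Fin.exists_succAbove_eq hi
    exact hkept ℓ j

lemma card_filter_sum_eq_and_apply_eq_le {α : Type*} [AddCancelCommMonoid α] [DecidableEq α]
    (Y : Finset α) {k h : ℕ} (hh : 2 ≤ h) {ℓ₁ ℓ₂ : Fin k} (hℓ : ℓ₁ ≠ ℓ₂) (i₁ i₂ : Fin h) :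
    #{T ∈ Fintype.piFinset (fun _ : Fin k => Fintype.piFinset fun _ : Fin h => Y) |
        (∀ ℓ ℓ', ∑ i, T ℓ i = ∑ i, T ℓ' i) ∧ T ℓ₁ i₁ = T ℓ₂ i₂} ≤ #Y ^ (k * (h - 1)) := by
  obtain ⟨h, rfl⟩ : ∃ h', h = h' + 1 := ⟨h - 1, by omega⟩
  set e : Fin k → Fin (h + 1) := Function.update (fun _ => i₁.succAbove ⟨0, by omega⟩) ℓ₂ i₂
  have he₁ : i₁ ≠ e ℓ₁ := by
    simp only [e, Function.update_of_ne hℓ]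
    exact (Fin.succAbove_ne _ _).symm
  have he₂ : e ℓ₂ = i₂ := Function.update_self ..
  calc _ ≤ #(Fintype.piFinset fun _ : Fin k => Fintype.piFinset fun _ : Fin h => Y) := by
        refine card_le_card_of_injOn (fun T ℓ i => T ℓ ((e ℓ).succAbove i))
          (fun T hT => ?_) fun T hT T' hT' hTT' => ?_
        · simp only [coe_filter, Fintype.mem_piFinset, Set.mem_ofPred_eq] at hT
          simp only [mem_coe, Fintype.mem_piFinset]
          exact fun ℓ i => hT.1 ℓ _
        · simp only [coe_filter, Fintype.mem_piFinset, Set.mem_ofPred_eq] at hT hT'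
          exact eq_of_sum_eq_of_succAbove_eq e he₁ hT.2.1 hT'.2.1 (he₂ ▸ hT.2.2)
            (he₂ ▸ hT'.2.2) fun ℓ i => congrFun (congrFun hTT' ℓ) i
    _ = #Y ^ (k * (h + 1 - 1)) := by
        simp [Fintype.card_piFinset, ← pow_mul, mul_comm]

lemma card_filter_not_injective_uncurry_le {α : Type*} [AddCancelCommMonoid α] [DecidableEq α]
    (Y : Finset α) {k h : ℕ} (hh : 2 ≤ h) (K : Finset (Fin k → Fin h → α))
    (hK : ∀ T ∈ K, (∀ ℓ i, T ℓ i ∈ Y) ∧ (∀ ℓ, Function.Injective (T ℓ)) ∧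
      ∀ ℓ ℓ', ∑ i, T ℓ i = ∑ i, T ℓ' i) :
    #{T ∈ K | ¬ Function.Injective (Function.uncurry T)} ≤ (k * h) ^ 2 * #Y ^ (k * (h - 1)) := by
  let pairs : Finset ((Fin k × Fin h) × (Fin k × Fin h)) := {pq | pq.1.1 ≠ pq.2.1}
  let coincide (pq : (Fin k × Fin h) × (Fin k × Fin h)) :=
    {T ∈ Fintype.piFinset (fun _ : Fin k => Fintype.piFinset fun _ : Fin h => Y) |
      (∀ ℓ ℓ', ∑ i, T ℓ i = ∑ i, T ℓ' i) ∧ T pq.1.1 pq.1.2 = T pq.2.1 pq.2.2}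
  have hsub : {T ∈ K | ¬ Function.Injective (Function.uncurry T)} ⊆ pairs.biUnion coincide := by
    intro T hT
    obtain ⟨hTK, hT⟩ := mem_filter.1 hT
    obtain ⟨hY, hrow, hsum⟩ := hK T hTK
    obtain ⟨p, q, hpq, hne⟩ := Function.not_injective_iff.1 hT
    have hrows : p.1 ≠ q.1 := fun h₁ =>
      hne (Prod.ext h₁ (hrow q.1 (by simpa [Function.uncurry, h₁] using hpq)))
    simp only [mem_biUnion, pairs, coincide, mem_filter, Fintype.mem_piFinset, mem_univ, true_and]
    exact ⟨(p, q), hrows, fun ℓ i => hY ℓ i, hsum, hpq⟩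
  calc _ ≤ ∑ pq ∈ pairs, #(coincide pq) := (card_le_card hsub).trans card_biUnion_le
    _ ≤ #pairs * #Y ^ (k * (h - 1)) := by
        simpa using sum_le_card_nsmul pairs _ _ fun pq hpq =>
          card_filter_sum_eq_and_apply_eq_le Y hh (mem_filter.1 hpq).2 pq.1.2 pq.2.2
    _ ≤ (k * h) ^ 2 * #Y ^ (k * (h - 1)) := by
        gcongr
        simpa [sq] using card_filter_le (univ : Finset ((Fin k × Fin h) × (Fin k × Fin h))) _

lemma grid_card (n d : ℕ) : #(grid n d) = n ^ d := by
  simp [grid, Fintype.card_piFinset]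

lemma sum_mem_grid {ι : Type*} [Fintype ι] [Nonempty ι] {n d : ℕ} {u : ι → Fin d → ℕ}
    (hu : ∀ i, u i ∈ grid n d) : ∑ i, u i ∈ grid (Fintype.card ι * n) d := by
  simp only [grid, Fintype.mem_piFinset, mem_Icc] at hu ⊢
  intro j
  rw [Finset.sum_apply]
  obtain ⟨i₀⟩ := ‹Nonempty ι›
  refine ⟨(hu i₀ j).1.trans (single_le_sum (fun i _ => Nat.zero_le (u i j)) (mem_univ i₀)), ?_⟩
  simpa using sum_le_card_nsmul univ (fun i => u i j) n fun i _ => (hu i j).2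

lemma isBkhSol_image_uncurry {d k h : ℕ} (T : Fin k → Fin h → Fin d → ℕ)
    (hT : Function.Injective (Function.uncurry T)) (hsum : ∀ ℓ ℓ', ∑ i, T ℓ i = ∑ i, T ℓ' i) :
    IsBkhSol d k h (univ.image (Function.uncurry T)) := by
  have hrow (ℓ : Fin k) : Function.Injective (T ℓ) := fun i j hij =>
    congrArg Prod.snd (@hT (ℓ, i) (ℓ, j) hij)
  refine ⟨by simp [card_image_of_injective _ hT], fun ℓ => univ.image (T ℓ),
    fun ℓ => by simp [card_image_of_injective _ (hrow ℓ)], fun ℓ₁ ℓ₂ hne => ?_, by ext; simp,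
    fun ℓ₁ ℓ₂ => ?_⟩
  · simp only [disjoint_left, mem_image, mem_univ, true_and]
    rintro _ ⟨i, rfl⟩ ⟨j, hj⟩
    exact hne (congrArg Prod.fst (@hT (ℓ₂, j) (ℓ₁, i) hj)).symm
  · rw [sum_image fun i _ j _ hij => hrow ℓ₁ hij, sum_image fun i _ j _ hij => hrow ℓ₂ hij]
    exact hsum ℓ₁ ℓ₂

lemma exists_isRainbowSub_image_fst_eq {d k h r : ℕ} {A X : Finset (Fin d → ℕ)}
    {P : (Fin d → ℕ) → Finset (Fin r)} (hXA : X ⊆ A) (hX : IsBkhSol d k h X)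
    (hP : ∀ x ∈ X, k * h ≤ #(P x)) :
    ∃ S, IsRainbowSub d k h r A P S ∧ S.image Prod.fst = X := by
  obtain ⟨f, hf, hfP⟩ := exists_injective_mem_of_card_le X P fun x hx => hX.1 ▸ hP x hx
  have hfst : (X.attach.image fun x : X => ((x : Fin d → ℕ), f x)).image Prod.fst = X := by
    simp [image_image, Function.comp_def]
  refine ⟨_, ⟨?_, ?_, hfst.symm ▸ hXA, hfst.symm ▸ hX, ?_⟩, hfst⟩
  · rintro _ hp _ hq hpq
    simp only [coe_image, Set.mem_image, mem_coe, mem_attach, true_and] at hp hq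
    obtain ⟨x, rfl⟩ := hp
    obtain ⟨y, rfl⟩ := hq
    obtain rfl : x = y := Subtype.ext hpq
    rfl
  · rintro _ hp _ hq hpq
    simp only [coe_image, Set.mem_image, mem_coe, mem_attach, true_and] at hp hq
    obtain ⟨x, rfl⟩ := hp
    obtain ⟨y, rfl⟩ := hq
    obtain rfl : x = y := hf hpq
    rfl
  · simp only [mem_image, mem_attach, true_and]
    rintro _ ⟨x, rfl⟩
    exact hfP x

lemma card_le_rainbowCount {d k h r : ℕ} {A : Finset (Fin d → ℕ)}
    {P : (Fin d → ℕ) → Finset (Fin r)} {𝒮 : Finset (Finset ((Fin d → ℕ) × Fin r))}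
    (h𝒮 : ∀ S ∈ 𝒮, IsRainbowSub d k h r A P S) : #𝒮 ≤ rainbowCount d k h r A P := by
  have hfin : {S | IsRainbowSub d k h r A P S}.Finite := by
    refine (A ×ˢ (univ : Finset (Fin r))).powerset.finite_toSet.subset fun S hS =>
      mem_powerset.2 fun p hp => ?_
    exact mem_product.2 ⟨hS.2.2.1 (mem_image_of_mem _ hp), mem_univ _⟩
  exact (Nat.card_eq_finsetCard 𝒮).symm.le.trans (Nat.card_mono hfin h𝒮)

open Classical in
lemma card_solutions_le_rainbowCount {d k h r : ℕ} {A Y : Finset (Fin d → ℕ)}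
    {P : (Fin d → ℕ) → Finset (Fin r)} (hYA : Y ⊆ A) (hY : ∀ x ∈ Y, k * h ≤ #(P x)) :
    #{X ∈ Y.powerset | IsBkhSol d k h X} ≤ rainbowCount d k h r A P := by
  have hS (X) (hX : X ∈ {X ∈ Y.powerset | IsBkhSol d k h X}) :
      ∃ S, IsRainbowSub d k h r A P S ∧ S.image Prod.fst = X := by
    rw [mem_filter, mem_powerset] at hX
    exact exists_isRainbowSub_image_fst_eq (hX.1.trans hYA) hX.2 fun x hx => hY x (hX.1 hx)
  choose! S hSsub hSfst using hS
  rw [← card_image_of_injOn fun X hX Z hZ hXZ => (hSfst X hX).symm.trans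
    ((congrArg _ hXZ).trans (hSfst Z hZ))]
  refine card_le_rainbowCount fun _ hS => ?_
  obtain ⟨X, hX, rfl⟩ := mem_image.1 hS
  exact hSsub X hX

open Classical in
lemma card_filter_injective_uncurry_le {d k h : ℕ} (Y : Finset (Fin d → ℕ))
    (K : Finset (Fin k → Fin h → Fin d → ℕ))
    (hK : ∀ T ∈ K, (∀ ℓ i, T ℓ i ∈ Y) ∧ ∀ ℓ ℓ', ∑ i, T ℓ i = ∑ i, T ℓ' i) :
    #{T ∈ K | Function.Injective (Function.uncurry T)} ≤
      (k * h) ^ (k * h) * #{X ∈ Y.powerset | IsBkhSol d k h X} := by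
  refine card_le_mul_card_image_of_maps_to (f := fun T => univ.image (Function.uncurry T))
    (fun T hT => ?_) _ fun X hX => ?_
  · obtain ⟨hTK, hT⟩ := mem_filter.1 hT
    simp only [mem_filter, mem_powerset]
    refine ⟨fun x hx => ?_, isBkhSol_image_uncurry T hT (hK T hTK).2⟩
    obtain ⟨p, -, rfl⟩ := mem_image.1 hx
    exact (hK T hTK).1 p.1 p.2
  · have hXcard : #X = k * h := (mem_filter.1 hX).2.1
    calc _ ≤ #(Fintype.piFinset fun _ : Fin k => Fintype.piFinset fun _ : Fin h => X) := by
          refine card_le_card fun T hT => ?_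
          obtain ⟨-, rfl⟩ := mem_filter.1 hT
          simp only [Fintype.mem_piFinset]
          exact fun ℓ i => mem_image_of_mem (Function.uncurry T) (mem_univ (ℓ, i))
      _ = (k * h) ^ (k * h) := by
          simp [Fintype.card_piFinset, hXcard, ← pow_mul, mul_comm h k]

lemma card_add_one_sub_pow_le {d k h r n : ℕ} (hk : k ≠ 0) (hh : 2 ≤ h) {A Y : Finset (Fin d → ℕ)}
    {P : (Fin d → ℕ) → Finset (Fin r)} (hA : A ⊆ grid n d) (hYA : Y ⊆ A)
    (hY : ∀ x ∈ Y, k * h ≤ #(P x)) :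
    (#Y + 1 - h) ^ (h * k) ≤ ((h * n) ^ d) ^ (k - 1) *
      ((k * h) ^ (k * h) * rainbowCount d k h r A P + (k * h) ^ 2 * #Y ^ (k * (h - 1))) := by
  classical
  set rows := {u ∈ Fintype.piFinset fun _ : Fin h => Y | Function.Injective u}
  set K := {T ∈ Fintype.piFinset fun _ : Fin k => rows | ∀ ℓ ℓ', ∑ i, T ℓ i = ∑ i, T ℓ' i}
  have hK (T) (hT : T ∈ K) : (∀ ℓ i, T ℓ i ∈ Y) ∧ (∀ ℓ, Function.Injective (T ℓ)) ∧
      ∀ ℓ ℓ', ∑ i, T ℓ i = ∑ i, T ℓ' i := by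
    simp only [K, rows, mem_filter, Fintype.mem_piFinset] at hT
    exact ⟨fun ℓ => (hT.1 ℓ).1, fun ℓ => (hT.1 ℓ).2, hT.2⟩
  have hsum_mem (u) (hu : u ∈ rows) : ∑ i, u i ∈ grid (h * n) d := by
    have : Nonempty (Fin h) := ⟨⟨0, by omega⟩⟩
    simp only [rows, mem_filter, Fintype.mem_piFinset] at hu
    simpa using sum_mem_grid fun i => hA (hYA (hu.1 i))
  calc (#Y + 1 - h) ^ (h * k) = ((#Y + 1 - h) ^ h) ^ k := pow_mul _ _ _
    _ ≤ #rows ^ k := by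
        gcongr
        exact (Nat.pow_sub_le_descFactorial _ _).trans (descFactorial_le_card_filter_injective Y h)
    _ ≤ #(grid (h * n) d) ^ (k - 1) * #K :=
        card_pow_le_card_pow_mul_card_filter_forall_eq hsum_mem hk
    _ = ((h * n) ^ d) ^ (k - 1) * (#{T ∈ K | Function.Injective (Function.uncurry T)} +
          #{T ∈ K | ¬ Function.Injective (Function.uncurry T)}) := by
        rw [grid_card, card_filter_add_card_filter_not]
    _ ≤ _ := by
        gcongr
        · exact (card_filter_injective_uncurry_le Y K fun T hT =>
            ⟨(hK T hT).1, (hK T hT).2.2⟩).trans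
              (Nat.mul_le_mul_left _ (card_solutions_le_rainbowCount hYA hY))
        · exact card_filter_not_injective_uncurry_le Y hh K hK

open Filter in
lemma eventually_mul_logb_pow_le (C : ℝ) (c : ℕ) :
    ∀ᶠ n : ℕ in atTop, C * Real.logb 2 n ^ c ≤ n := by
  have hbound := ((Real.isLittleO_pow_logb_id_atTop (b := 2) (n := c)).const_mul_left C).bound
    one_pos
  filter_upwards [tendsto_natCast_atTop_atTop.eventually hbound] with n hn
  simpa using (le_abs_self _).trans hn

lemma false_of_pow_le_mul {m R L W C₁ C₂ : ℝ} {e p : ℕ} (hm : 0 < m) (hR : 0 ≤ R) (hL : 1 ≤ L)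
    (hcount : m ^ (e + 1) ≤ W * L ^ p * (C₁ * R + C₂ * m ^ e))
    (hRm : R * L ^ p * L ^ (e + 1) ≤ m ^ (e + 1)) (hLW : 4 * W * C₁ ≤ L)
    (hmW : 4 * W * C₂ * L ^ p ≤ m) :
    False := by
  have hLe : L ≤ L ^ (e + 1) := le_self_pow₀ hL e.succ_ne_zero
  have hRLp : 0 ≤ R * L ^ p := by positivity
  have hfirst : 4 * (W * L ^ p * (C₁ * R)) ≤ m ^ (e + 1) :=
    calc 4 * (W * L ^ p * (C₁ * R)) = 4 * W * C₁ * (R * L ^ p) := by ring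
      _ ≤ L ^ (e + 1) * (R * L ^ p) := mul_le_mul_of_nonneg_right (hLW.trans hLe) hRLp
      _ ≤ m ^ (e + 1) := by linarith
  have hsecond : 4 * (W * L ^ p * (C₂ * m ^ e)) ≤ m ^ (e + 1) :=
    calc 4 * (W * L ^ p * (C₂ * m ^ e)) = 4 * W * C₂ * L ^ p * m ^ e := by ring
      _ ≤ m * m ^ e := by gcongr
      _ = m ^ (e + 1) := (pow_succ' m e).symm
  have : 0 < m ^ (e + 1) := by positivity
  nlinarith

lemma pow_le_mul_of_pow_sub_le {d k h n m B : ℕ} {L : ℝ} (hk : k ≠ 0) (hh : 1 ≤ h)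
    (hm : 2 * h ≤ m) (hnm : (n : ℝ) ^ d ≤ m * L ^ 5)
    (hcount : (m + 1 - h) ^ (h * k) ≤ ((h * n) ^ d) ^ (k - 1) * B) :
    (m : ℝ) ^ (k * (h - 1) + 1) ≤
      2 ^ (h * k) * (h : ℝ) ^ (d * (k - 1)) * L ^ (5 * (k - 1)) * B := by
  have hsplit : k * (h - 1) + 1 + (k - 1) = h * k := by zify [hh, Nat.one_le_iff_ne_zero.2 hk]; ring
  have hm2 : m ^ (h * k) ≤ 2 ^ (h * k) * (((h * n) ^ d) ^ (k - 1) * B) :=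
    calc m ^ (h * k) ≤ (2 * (m + 1 - h)) ^ (h * k) := Nat.pow_le_pow_left (by omega) _
      _ ≤ _ := by rw [mul_pow]; exact Nat.mul_le_mul_left _ hcount
  have hmR : (m : ℝ) ^ (k * (h - 1) + 1) * (m : ℝ) ^ (k - 1) ≤
      2 ^ (h * k) * (h : ℝ) ^ (d * (k - 1)) * L ^ (5 * (k - 1)) * B * (m : ℝ) ^ (k - 1) :=
    calc (m : ℝ) ^ (k * (h - 1) + 1) * (m : ℝ) ^ (k - 1) = (m : ℝ) ^ (h * k) := by
          rw [← pow_add, hsplit]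
      _ ≤ 2 ^ (h * k) * (h : ℝ) ^ (d * (k - 1)) * ((n : ℝ) ^ d) ^ (k - 1) * B := by
          rw [pow_mul (h : ℝ)]
          exact_mod_cast hm2.trans_eq (by ring)
      _ ≤ 2 ^ (h * k) * (h : ℝ) ^ (d * (k - 1)) * ((m : ℝ) * L ^ 5) ^ (k - 1) * B := by
          gcongr
      _ = _ := by ring
  exact le_of_mul_le_mul_right hmR (pow_pos (by exact_mod_cast (by omega : 0 < m)) _)

/-- The constant `4 W C₁` of `false_of_pow_le_mul` in our application, where
`W = 2^(hk) h^(d(k-1))` and `C₁ = (kh)^(kh)`. -/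
def threshold (d k h : ℕ) : ℕ := 4 * 2 ^ (h * k) * h ^ (d * (k - 1)) * (k * h) ^ (k * h)

lemma two_mul_le_threshold (d k h : ℕ) (hk : k ≠ 0) (hh : h ≠ 0) : 2 * h ≤ threshold d k h := by
  have h2 : 2 * h ≤ 4 * 2 ^ (h * k) :=
    calc 2 * h ≤ 4 * 2 ^ h := by linarith [Nat.lt_two_pow_self (n := h)]
      _ ≤ 4 * 2 ^ (h * k) := by gcongr <;> [norm_num; exact Nat.le_mul_of_pos_right h (by omega)]
  calc 2 * h ≤ 4 * 2 ^ (h * k) * 1 * 1 := by simpa using h2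
    _ ≤ threshold d k h := by unfold threshold; gcongr <;> apply Nat.one_le_pow <;> positivity

lemma threshold_ge_mul_sq (d k h : ℕ) (hk : k ≠ 0) (hh : 2 ≤ h) :
    4 * 2 ^ (h * k) * h ^ (d * (k - 1)) * (k * h) ^ 2 ≤ threshold d k h := by
  unfold threshold
  gcongr
  · exact Nat.mul_pos (by omega) (by omega)
  · nlinarith [Nat.one_le_iff_ne_zero.2 hk]

lemma mul_pow_le_pow_of_le_div {R a m L : ℝ} {k h : ℕ} (hk : k ≠ 0) (hh : h ≠ 0) (hL : 0 < L)
    (ha : 0 ≤ a) (ham : a ≤ m * L ^ 4) (hR : R ≤ a ^ (k * (h - 1) + 1) / L ^ (5 * k * h)) :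
    R * L ^ (5 * (k - 1)) * L ^ (k * (h - 1) + 1) ≤ m ^ (k * (h - 1) + 1) := by
  set e := k * (h - 1) + 1
  have hexp : 5 * k * h = 4 * e + (5 * (k - 1) + e) := by
    simp only [e]
    zify [Nat.one_le_iff_ne_zero.2 hh, Nat.one_le_iff_ne_zero.2 hk]
    ring
  refine le_of_mul_le_mul_left ?_ (by positivity : 0 < L ^ (4 * e))
  calc L ^ (4 * e) * (R * L ^ (5 * (k - 1)) * L ^ e) = R * L ^ (5 * k * h) := by
        rw [hexp]; ring
    _ ≤ a ^ e := (le_div_iff₀ (by positivity)).1 hR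
    _ ≤ (m * L ^ 4) ^ e := by gcongr
    _ = L ^ (4 * e) * m ^ e := by ring

lemma le_div_pow_four_of_count {d k h n m a R : ℕ} {L : ℝ} (hd : d ≠ 0) (hk : k ≠ 0)
    (hh : 2 ≤ h) (hLC : (threshold d k h : ℝ) ≤ L) (hnC : threshold d k h * L ^ (5 * k) ≤ n)
    (hcount : (m + 1 - h) ^ (h * k) ≤ ((h * n) ^ d) ^ (k - 1) *
      ((k * h) ^ (k * h) * R + (k * h) ^ 2 * m ^ (k * (h - 1))))
    (ha : (n : ℝ) ^ d / L ≤ a) (hR : (R : ℝ) ≤ a ^ (k * (h - 1) + 1) / L ^ (5 * k * h)) :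
    (m : ℝ) ≤ a / L ^ 4 := by
  have hC : (2 * h : ℝ) ≤ threshold d k h := by
    exact_mod_cast two_mul_le_threshold d k h hk (by omega)
  have hC1 : (1 : ℝ) ≤ threshold d k h := by
    have : (2 : ℝ) ≤ h := by exact_mod_cast hh
    linarith
  have hL : 1 ≤ L := hC1.trans hLC
  by_contra! hm
  have ham : (a : ℝ) < m * L ^ 4 := (div_lt_iff₀ (by positivity)).1 hm
  have hnm : (n : ℝ) ^ d ≤ m * L ^ 5 := by
    have := (div_le_iff₀ (by positivity)).1 ha
    nlinarith
  have hmC : threshold d k h * L ^ (5 * (k - 1)) ≤ (m : ℝ) := by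
    refine le_of_mul_le_mul_right ?_ (by positivity : (0 : ℝ) < L ^ 5)
    calc threshold d k h * L ^ (5 * (k - 1)) * L ^ 5 = threshold d k h * L ^ (5 * k) := by
          rw [mul_assoc, ← pow_add]; congr 2; omega
      _ ≤ n := hnC
      _ ≤ (n : ℝ) ^ d := le_self_pow₀ ((one_le_mul_of_one_le_of_one_le hC1
          (one_le_pow₀ hL)).trans hnC) hd
      _ ≤ m * L ^ 5 := hnm
  have hm2h : 2 * h ≤ m := by
    have := hC.trans ((le_mul_of_one_le_right (by positivity) (one_le_pow₀ hL)).trans hmC)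
    exact_mod_cast this
  have hcountR := pow_le_mul_of_pow_sub_le hk (by omega) hm2h hnm hcount
  push_cast at hcountR
  refine false_of_pow_le_mul (Nat.cast_pos.2 (by omega : 0 < m)) R.cast_nonneg hL hcountR
    (mul_pow_le_pow_of_le_div hk (by omega) (by positivity) a.cast_nonneg ham.le hR) ?_ ?_
  · simpa [threshold, mul_assoc] using hLC
  · refine le_trans ?_ hmC
    gcongr
    have := (Nat.cast_le (α := ℝ)).2 (threshold_ge_mul_sq d k h hk hh)
    push_cast at this
    linarith

theorem stmt14_general (d k h r : ℕ) (hd : 1 ≤ d) (hk : 2 ≤ k) (hh : 2 ≤ h) :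
    ∃ N : ℕ, ∀ n : ℕ, N ≤ n → ∀ A : Finset (Fin d → ℕ), A ⊆ grid n d →
      (n : ℝ) ^ d / Real.logb 2 n ≤ (A.card : ℝ) →
      ∀ P : (Fin d → ℕ) → Finset (Fin r),
        (rainbowCount d k h r A P : ℝ) ≤
          (A.card : ℝ) ^ (k * (h - 1) + 1) / (Real.logb 2 n) ^ (5 * k * h) →
        ((A.filter fun x => k * h ≤ (P x).card).card : ℝ) ≤
          (A.card : ℝ) / (Real.logb 2 n) ^ 4 := by
  have hlog := (Real.tendsto_logb_atTop one_lt_two).comp tendsto_natCast_atTop_atTop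
  obtain ⟨N, hN⟩ := Filter.eventually_atTop.1 ((hlog.eventually_ge_atTop (threshold d k h : ℝ)).and
    (eventually_mul_logb_pow_le (threshold d k h) (5 * k)))
  refine ⟨N, fun n hn A hA hAcard P hR => ?_⟩
  obtain ⟨hLC, hnC⟩ := hN n hn
  have hcount := card_add_one_sub_pow_le (by omega : k ≠ 0) hh hA
    (filter_subset (fun x => k * h ≤ #(P x)) A) fun x hx => (mem_filter.1 hx).2
  exact le_div_pow_four_of_count (by omega) (by omega) hh hLC hnC hcount hAcard hR

/-- templates with few rainbow-solution subtemplates have few points with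
palettes of size at least kh. -/
theorem stmt14 (d k h r : ℕ) (hd : 1 ≤ d) (hk : 2 ≤ k) (hh : 2 ≤ h) (hr : k * h ≤ r) :
    ∃ N : ℕ, ∀ n : ℕ, N ≤ n → ∀ A : Finset (Fin d → ℕ), A ⊆ grid n d →
      (n : ℝ) ^ d / Real.logb 2 n ≤ (A.card : ℝ) →
      ∀ P : (Fin d → ℕ) → Finset (Fin r),
        (rainbowCount d k h r A P : ℝ) ≤
          (A.card : ℝ) ^ (k * (h - 1) + 1) / (Real.logb 2 n) ^ (5 * k * h) →
        ((A.filter fun x => k * h ≤ (P x).card).card : ℝ) ≤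
          (A.card : ℝ) / (Real.logb 2 n) ^ 4 :=
  stmt14_general d k h r hd hk hh
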